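/- arXiv:1908.07620 — 2 statements merged into one kernel-verified Lean document; each statement's English description precedes it below -/
import Mathlib

section
/- For the action of G = Z/2 × Z/2 on A: ω₁ and ω₄ are fixed points of the G-action; g₃.ωᵢ = ωᵢ for all i = 1,2,3,4; g₂.ω₂ = ω₃; and G acts simply transitively on the set {η₁, η₂, η₃, η₄}: setting η_{gᵢ} := ηᵢ, one has gᵢ.η_{g_j} = η_{gᵢg_j} for all i, j. -/
open TensorProduct

/-- The defining relations of the second example: `x⁴ = 1`, `xy = yx³`, and
`y² = (1/2)(ζ + x - ζx² + x³)`. -/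
inductive SecondRel (K : Type*) [Field K] (ζ : K) :
    FreeAlgebra K (Fin 2) → FreeAlgebra K (Fin 2) → Prop
  | x_pow_four : SecondRel K ζ (FreeAlgebra.ι K 0 ^ 4) 1
  | x_mul_y : SecondRel K ζ (FreeAlgebra.ι K 0 * FreeAlgebra.ι K 1)
      (FreeAlgebra.ι K 1 * FreeAlgebra.ι K 0 ^ 3)
  | y_sq : SecondRel K ζ (FreeAlgebra.ι K 1 ^ 2)
      ((2 : K)⁻¹ • (ζ • (1 : FreeAlgebra K (Fin 2)) + FreeAlgebra.ι K 0
        - ζ • (FreeAlgebra.ι K 0 ^ 2) + FreeAlgebra.ι K 0 ^ 3))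

/-- The second example: the `K`-algebra generated by noncommuting elements `x`, `y`
subject to `x⁴ = 1`, `xy = yx³` and `y² = (1/2)(ζ + x - ζx² + x³)`. -/
abbrev SecondAlg (K : Type*) [Field K] (ζ : K) : Type _ := RingQuot (SecondRel K ζ)

/-- The generator `x` of the second example. -/
noncomputable def xS (K : Type*) [Field K] (ζ : K) : SecondAlg K ζ :=
  RingQuot.mkAlgHom K (SecondRel K ζ) (FreeAlgebra.ι K 0)

/-- The generator `y` of the second example. -/
noncomputable def yS (K : Type*) [Field K] (ζ : K) : SecondAlg K ζ :=
  RingQuot.mkAlgHom K (SecondRel K ζ) (FreeAlgebra.ι K 1)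

/-- The group `G = ℤ/2 × ℤ/2`, written multiplicatively. -/
abbrev GG : Type := Multiplicative (ZMod 2 × ZMod 2)

/-- `g₁ = (0,0)`. -/
def g1 : GG := Multiplicative.ofAdd (0, 0)
/-- `g₂ = (1,0)`. -/
def g2 : GG := Multiplicative.ofAdd (1, 0)
/-- `g₃ = (0,1)`. -/
def g3 : GG := Multiplicative.ofAdd (0, 1)
/-- `g₄ = (1,1)`. -/
def g4 : GG := Multiplicative.ofAdd (1, 1)

/-- The twisted multiplication of `A ⊗̂ A`:
`(a ⊗ b)(a' ⊗ b') = (1/4) ∑_{g,g'} θ(g,g') (a (g.a')) ⊗ ((g'.b) b')`,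
extended bilinearly. -/
noncomputable def twMul {K : Type*} [Field K] {B : Type*} [Ring B] [Algebra K B]
    {G : Type*} [Monoid G] [Fintype G]
    (ρ : G →* (B →ₐ[K] B)) (θ : G → G → K)
    (z w : B ⊗[K] B) : B ⊗[K] B :=
  (4 : K)⁻¹ • ∑ g : G, ∑ g' : G, θ g g' •
    (TensorProduct.map (LinearMap.mul' K B) (LinearMap.mul' K B))
      ((TensorProduct.tensorTensorTensorComm K B B B B)
        ((TensorProduct.map
            (TensorProduct.map LinearMap.id (ρ g').toLinearMap)
            (TensorProduct.map (ρ g).toLinearMap LinearMap.id))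
          (z ⊗ₜ[K] w)))

/-- `ω₁ := 1`. -/
noncomputable def w1S (K : Type*) [Field K] (ζ : K) : SecondAlg K ζ := 1

/-- `ω₂ := (1/2)(1 + ιζ²)x + (1/2)(1 - ιζ²)x³`. -/
noncomputable def w2S (K : Type*) [Field K] (i ζ : K) : SecondAlg K ζ :=
  ((2 : K)⁻¹ * (1 + i * ζ ^ 2)) • xS K ζ +
    ((2 : K)⁻¹ * (1 - i * ζ ^ 2)) • (xS K ζ ^ 3)

/-- `ω₃ := (1/2)(1 - ιζ²)x + (1/2)(1 + ιζ²)x³`. -/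
noncomputable def w3S (K : Type*) [Field K] (i ζ : K) : SecondAlg K ζ :=
  ((2 : K)⁻¹ * (1 - i * ζ ^ 2)) • xS K ζ +
    ((2 : K)⁻¹ * (1 + i * ζ ^ 2)) • (xS K ζ ^ 3)

/-- `ω₄ := x²`. -/
noncomputable def w4S (K : Type*) [Field K] (ζ : K) : SecondAlg K ζ := xS K ζ ^ 2

/-- `η₁ := y`. -/
noncomputable def e1S (K : Type*) [Field K] (ζ : K) : SecondAlg K ζ := yS K ζ

/-- `η₂ := x³y`. -/
noncomputable def e2S (K : Type*) [Field K] (ζ : K) : SecondAlg K ζ := xS K ζ ^ 3 * yS K ζ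

/-- `η₃ := x²y`. -/
noncomputable def e3S (K : Type*) [Field K] (ζ : K) : SecondAlg K ζ := xS K ζ ^ 2 * yS K ζ

/-- `η₄ := xy`. -/
noncomputable def e4S (K : Type*) [Field K] (ζ : K) : SecondAlg K ζ := xS K ζ * yS K ζ

/- Both generators send `x` to a power of `x`: `g₃` fixes it, hence fixes every polynomial in `x`,
and `g₂` inverts it, so it swaps `x` and `x³ = x⁻¹` (exchanging `ω₂` and `ω₃`) and fixes `x²`.
On `η_g = x^{c(g)} y`, with `c(a, b) = 3a + 2b mod 4`, the generators act by affine maps of the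
exponent (`g₂ : n ↦ 3n + 3`, `g₃ : n ↦ n + 2`, read mod 4 since `x⁴ = 1`), and these match
left multiplication by `g₂`, `g₃` on `c`. -/

theorem map_pow_mul_of_eq {M F : Type*} [Monoid M] [FunLike F M M] [MonoidHomClass F M M]
    {f : F} {x y : M} {k m : ℕ} (hx : f x = x ^ k) (hy : f y = x ^ m * y) (n : ℕ) :
    f (x ^ n * y) = x ^ (k * n + m) * y := by
  rw [map_mul, map_pow, hx, hy, ← mul_assoc, ← pow_mul, ← pow_add]

theorem GG.induction_on_g2_g3 {P : GG → Prop} (h1 : P 1) (h2 : P g2) (h3 : P g3)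
    (hmul : ∀ a b, P a → P b → P (a * b)) (g : GG) : P g := by
  obtain rfl | rfl | rfl | rfl : g = 1 ∨ g = g2 ∨ g = g3 ∨ g = g2 * g3 := by
    revert g; decide
  exacts [h1, h2, h3, hmul _ _ h2 h3]

def etaExp (g : GG) : ℕ :=
  (3 * (Multiplicative.toAdd g).1.val + 2 * (Multiplicative.toAdd g).2.val) % 4

theorem etaExp_g2_mul (j : GG) : etaExp (g2 * j) = (3 * etaExp j + 3) % 4 := by
  revert j; decide

theorem etaExp_g3_mul (j : GG) : etaExp (g3 * j) = (1 * etaExp j + 2) % 4 := by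
  revert j; decide

section SecondAlg

variable {K : Type*} [Field K] {ζ : K}

theorem xS_pow_four : xS K ζ ^ 4 = 1 := by
  simpa [xS] using RingQuot.mkAlgHom_rel K (SecondRel.x_pow_four (K := K) (ζ := ζ))

theorem xS_pow_mod_four (n : ℕ) : xS K ζ ^ (n % 4) = xS K ζ ^ n :=
  (pow_eq_pow_mod n xS_pow_four).symm

variable (K ζ) in
noncomputable def etaS (g : GG) : SecondAlg K ζ := xS K ζ ^ etaExp g * yS K ζ

theorem apply_etaS_of_etaExp_mul {f : SecondAlg K ζ →ₐ[K] SecondAlg K ζ} {g : GG} {k m : ℕ}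
    (hx : f (xS K ζ) = xS K ζ ^ k) (hy : f (yS K ζ) = xS K ζ ^ m * yS K ζ)
    (hexp : ∀ j, etaExp (g * j) = (k * etaExp j + m) % 4) (j : GG) :
    f (etaS K ζ j) = etaS K ζ (g * j) := by
  rw [etaS, etaS, map_pow_mul_of_eq hx hy, hexp, xS_pow_mod_four]

theorem apply_etaS_eq (ρ : GG →* (SecondAlg K ζ →ₐ[K] SecondAlg K ζ))
    (hρ2x : ρ g2 (xS K ζ) = xS K ζ ^ 3) (hρ2y : ρ g2 (yS K ζ) = xS K ζ ^ 3 * yS K ζ)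
    (hρ3x : ρ g3 (xS K ζ) = xS K ζ) (hρ3y : ρ g3 (yS K ζ) = xS K ζ ^ 2 * yS K ζ)
    (i j : GG) : ρ i (etaS K ζ j) = etaS K ζ (i * j) := by
  induction i using GG.induction_on_g2_g3 generalizing j with
  | h1 => rw [map_one, one_mul]; rfl
  | h2 => exact apply_etaS_of_etaExp_mul hρ2x hρ2y etaExp_g2_mul j
  | h3 => exact apply_etaS_of_etaExp_mul (hρ3x.trans (pow_one _).symm) hρ3y etaExp_g3_mul j
  | hmul a b ha hb => rw [map_mul, AlgHom.mul_apply, hb, ha, mul_assoc]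

theorem eq_etaS {η : GG → SecondAlg K ζ}
    (h : η g1 = e1S K ζ ∧ η g2 = e2S K ζ ∧ η g3 = e3S K ζ ∧ η g4 = e4S K ζ) :
    η = etaS K ζ := by
  obtain ⟨h1, h2, h3, h4⟩ := h
  funext g
  obtain rfl | rfl | rfl | rfl : g = g1 ∨ g = g2 ∨ g = g3 ∨ g = g4 := by revert g; decide
  · rw [h1, e1S, etaS, show etaExp g1 = 0 from rfl, pow_zero, one_mul]
  · rw [h2]; rfl
  · rw [h3]; rfl
  · rw [h4, e4S, etaS, show etaExp g4 = 1 from rfl, pow_one]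

theorem apply_w4S_eq (ρ : GG →* (SecondAlg K ζ →ₐ[K] SecondAlg K ζ))
    (hρ2x : ρ g2 (xS K ζ) = xS K ζ ^ 3) (hρ3x : ρ g3 (xS K ζ) = xS K ζ) (g : GG) :
    ρ g (w4S K ζ) = w4S K ζ := by
  induction g using GG.induction_on_g2_g3 with
  | h1 => rw [map_one]; rfl
  | h2 => rw [w4S, map_pow, hρ2x, ← pow_mul, ← xS_pow_mod_four]
  | h3 => rw [w4S, map_pow, hρ3x]
  | hmul a b ha hb => rw [map_mul, AlgHom.mul_apply, hb, ha]

end SecondAlg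

theorem stmt_15_general {K : Type*} [Field K] (ι : K) (ζ : K)
    (ρ : GG →* (SecondAlg K ζ →ₐ[K] SecondAlg K ζ))
    (hρ2x : ρ g2 (xS K ζ) = xS K ζ ^ 3) (hρ2y : ρ g2 (yS K ζ) = xS K ζ ^ 3 * yS K ζ)
    (hρ3x : ρ g3 (xS K ζ) = xS K ζ) (hρ3y : ρ g3 (yS K ζ) = xS K ζ ^ 2 * yS K ζ) :
    -- `ω₁` and `ω₄` are fixed points of the `G`-action
    (∀ g : GG, ρ g (w1S K ζ) = w1S K ζ ∧ ρ g (w4S K ζ) = w4S K ζ) ∧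
    -- `g₃.ωᵢ = ωᵢ` for all `i`
    (ρ g3 (w1S K ζ) = w1S K ζ ∧ ρ g3 (w2S K ι ζ) = w2S K ι ζ ∧
      ρ g3 (w3S K ι ζ) = w3S K ι ζ ∧ ρ g3 (w4S K ζ) = w4S K ζ) ∧
    -- `g₂.ω₂ = ω₃`
    ρ g2 (w2S K ι ζ) = w3S K ι ζ ∧
    -- `G` acts simply transitively on `{η₁, η₂, η₃, η₄}`
    (∀ η : GG → SecondAlg K ζ,
      (η g1 = e1S K ζ ∧ η g2 = e2S K ζ ∧ η g3 = e3S K ζ ∧ η g4 = e4S K ζ) →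
      ∀ i j : GG, ρ i (η j) = η (i * j)) := by
  have hx9 : (xS K ζ ^ 3) ^ 3 = xS K ζ := by rw [← pow_mul, ← xS_pow_mod_four, pow_one]
  refine ⟨fun g => ⟨map_one _, apply_w4S_eq ρ hρ2x hρ3x g⟩,
    ⟨map_one _, ?_, ?_, apply_w4S_eq ρ hρ2x hρ3x g3⟩, ?_, ?_⟩
  · simp only [w2S, map_add, map_smul, map_pow, hρ3x]
  · simp only [w3S, map_add, map_smul, map_pow, hρ3x]
  · rw [w2S, w3S, map_add, map_smul, map_smul, map_pow, hρ2x, hx9, add_comm]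
  · rintro η hη i j
    rw [eq_etaS hη]
    exact apply_etaS_eq ρ hρ2x hρ2y hρ3x hρ3y i j

theorem stmt_15 {K : Type*} [Field K] (ι : K) (hι : IsPrimitiveRoot ι 4)
    (ζ : K) (hζ : ζ ^ 4 = 1)
    (ρ : GG →* (SecondAlg K ζ →ₐ[K] SecondAlg K ζ))
    (hρ2x : ρ g2 (xS K ζ) = xS K ζ ^ 3) (hρ2y : ρ g2 (yS K ζ) = xS K ζ ^ 3 * yS K ζ)
    (hρ3x : ρ g3 (xS K ζ) = xS K ζ) (hρ3y : ρ g3 (yS K ζ) = xS K ζ ^ 2 * yS K ζ) :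
    -- `ω₁` and `ω₄` are fixed points of the `G`-action
    (∀ g : GG, ρ g (w1S K ζ) = w1S K ζ ∧ ρ g (w4S K ζ) = w4S K ζ) ∧
    -- `g₃.ωᵢ = ωᵢ` for all `i`
    (ρ g3 (w1S K ζ) = w1S K ζ ∧ ρ g3 (w2S K ι ζ) = w2S K ι ζ ∧
      ρ g3 (w3S K ι ζ) = w3S K ι ζ ∧ ρ g3 (w4S K ζ) = w4S K ζ) ∧
    -- `g₂.ω₂ = ω₃`
    ρ g2 (w2S K ι ζ) = w3S K ι ζ ∧
    -- `G` acts simply transitively on `{η₁, η₂, η₃, η₄}`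
    (∀ η : GG → SecondAlg K ζ,
      (η g1 = e1S K ζ ∧ η g2 = e2S K ζ ∧ η g3 = e3S K ζ ∧ η g4 = e4S K ζ) →
      ∀ i j : GG, ρ i (η j) = η (i * j)) :=
  stmt_15_general ι ζ ρ hρ2x hρ2y hρ3x hρ3y
end

section
/- The K-algebra A generated by noncommuting elements x, y subject to x⁴ = 1, xy = yx³, and y² = (1/2)(ζ + x − ζx² + x³) is isomorphic as a K-algebra to K⁴ ⊕ M₂(K), i.e., to the product of four copies of K and the algebra of 2 × 2 matrices over K. In particular A is semisimple. -/
open TensorProduct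

section ColSub
variable {K : Type*} [Field K]

/-- Column submodule of the 2x2 matrix ring. -/
def colSub (K : Type*) [Field K] (j : Fin 2) :
    Submodule (Matrix (Fin 2) (Fin 2) K) (Matrix (Fin 2) (Fin 2) K) where
  carrier := {m | ∀ a b, b ≠ j → m a b = 0}
  add_mem' := fun hp hq a b hb => by simp [Matrix.add_apply, hp a b hb, hq a b hb]
  zero_mem' := fun a b hb => rfl
  smul_mem' := by
    intro r m hm a b hb
    show (r * m) a b = 0
    rw [Matrix.mul_apply]
    exact Finset.sum_eq_zero fun c _ => by rw [hm c b hb, mul_zero]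


theorem colSub_simple' (j : Fin 2) : IsSimpleModule (Matrix (Fin 2) (Fin 2) K) (colSub K j) := by
  have hnt : (Matrix.single j j (1:K)) ∈ colSub K j := by
    intro a b hb
    exact Matrix.single_apply_of_ne _ _ _ _ _ (by tauto)
  have hne : (⟨_, hnt⟩ : colSub K j) ≠ 0 := by
    intro h
    have := congrArg (fun z : colSub K j => (z : Matrix (Fin 2) (Fin 2) K) j j) h
    simp [Matrix.single_apply_same] at this
  haveI : Nontrivial (colSub K j) := ⟨_, 0, hne⟩
  refine (isSimpleModule_iff ..).mpr { eq_bot_or_eq_top := ?_ }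
  intro N
  rcases eq_or_ne N ⊥ with h | h
  · exact Or.inl h
  · right
    obtain ⟨x, hxN, hx0⟩ := Submodule.exists_mem_ne_zero_of_ne_bot h
    -- x : colSub K j nonzero; find nonzero entry, necessarily in column j
    have hx0' : (x : Matrix (Fin 2) (Fin 2) K) ≠ 0 := fun h => hx0 (Subtype.ext h)
    obtain ⟨i, b, hib⟩ : ∃ i b, (x : Matrix (Fin 2) (Fin 2) K) i b ≠ 0 := by
      by_contra hall
      push_neg at hall
      exact hx0' (by ext a b; simp [hall])
    have hbj : b = j := by
      by_contra hbj
      exact hib (x.2 i b hbj)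
    subst hbj
    rw [eq_top_iff]
    rintro ⟨w, hw⟩ -
    have key : (Matrix.of fun a c => if c = i then ((x : Matrix (Fin 2) (Fin 2) K) i b)⁻¹ * w a b else 0) •
        x = ⟨w, hw⟩ := by
      apply Subtype.ext
      show _ * (x : Matrix (Fin 2) (Fin 2) K) = w
      ext a c
      rw [Matrix.mul_apply]
      rcases eq_or_ne c b with rfl | hcb
      · simp [Finset.sum_ite_eq, ite_mul]
        field_simp
      · simp [x.2 _ c hcb, hw a c hcb]
    rw [← key]
    exact N.smul_mem _ hxN

instance matrixSS : IsSemisimpleRing (Matrix (Fin 2) (Fin 2) K) := by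
  refine isSemisimpleModule_of_isSemisimpleModule_submodule' (p := colSub K) (fun j => ?_) ?_
  · haveI := colSub_simple' (K := K) j
    infer_instance
  · rw [eq_top_iff]
    intro m _
    have hm : m = (Matrix.of fun a b => if b = 0 then m a b else 0)
        + (Matrix.of fun a b => if b = 1 then m a b else 0) := by
      ext a b
      fin_cases b <;> simp
    rw [hm]
    refine add_mem (Submodule.mem_iSup_of_mem 0 ?_) (Submodule.mem_iSup_of_mem 1 ?_) <;>
      intro a b hb <;> simp [Matrix.of_apply, hb]


end ColSub

section Target
variable {K : Type*} [Field K] (ι ζ : K)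

/-- image of x -/
noncomputable def XT : (Fin 4 → K) × Matrix (Fin 2) (Fin 2) K :=
  (![1, 1, -1, -1], !![ι, 0; 0, -ι])

/-- image of y -/
noncomputable def YT : (Fin 4 → K) × Matrix (Fin 2) (Fin 2) K :=
  (![1, -1, ι, -ι], !![0, ζ; 1, 0])

variable (hι2 : ι^2 = -1) (hζ : ζ^4 = 1)
include hι2

theorem XT_pow_four : (XT ι (K := K))^4 = 1 := by
  rw [Prod.ext_iff]
  refine ⟨?_, ?_⟩
  · show (![(1:K),1,-1,-1])^4 = 1
    funext k
    rw [Pi.pow_apply, Pi.one_apply]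
    fin_cases k <;> norm_num
  · show (!![ι, 0; 0, -ι])^4 = 1
    have hι4 : ι^4 = 1 := by rw [show (4:ℕ) = 2*2 from rfl, pow_mul, hι2]; ring
    rw [pow_succ, pow_succ, pow_succ, pow_one, Matrix.mul_fin_two, Matrix.mul_fin_two,
      Matrix.mul_fin_two, Matrix.one_fin_two]
    ring_nf
    rw [hι4]

theorem Dpow2 : !![ι, 0; 0, -ι] ^ 2 = !![(-1:K), 0; 0, -1] := by
  rw [pow_two, Matrix.mul_fin_two]
  ext a b
  fin_cases a <;> fin_cases b <;> simp <;> linear_combination hι2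

theorem Dpow3 : !![ι, 0; 0, -ι] ^ 3 = !![(-ι:K), 0; 0, ι] := by
  rw [pow_succ, Dpow2 ι hι2, Matrix.mul_fin_two]
  congr 1 <;> ring

theorem XT_mul_YT : (XT ι (K := K)) * YT ι ζ = YT ι ζ * (XT ι) ^ 3 := by
  rw [Prod.ext_iff]
  refine ⟨?_, ?_⟩
  · show ![(1:K),1,-1,-1] * ![1,-1,ι,-ι] = ![1,-1,ι,-ι] * ![1,1,-1,-1] ^ 3
    funext k
    simp only [Pi.mul_apply, Pi.pow_apply]
    fin_cases k <;> norm_num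
  · show !![ι, 0; 0, -ι] * !![0, ζ; 1, 0] = !![0, ζ; 1, 0] * !![ι, 0; 0, -ι] ^ 3
    rw [Dpow3 ι hι2, Matrix.mul_fin_two, Matrix.mul_fin_two]
    congr 1 <;> ring

theorem YT_sq (h2 : (2:K) ≠ 0) : (YT ι ζ (K := K)) ^ 2 =
    (2 : K)⁻¹ • (ζ • 1 + XT ι - ζ • ((XT ι) ^ 2) + (XT ι) ^ 3) := by
  rw [Prod.ext_iff]
  refine ⟨?_, ?_⟩
  · show ![(1:K),-1,ι,-ι] ^ 2 =
      (2 : K)⁻¹ • (ζ • 1 + ![1,1,-1,-1] - ζ • (![1,1,-1,-1] ^ 2) + ![1,1,-1,-1] ^ 3)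
    funext k
    simp only [Pi.pow_apply, Pi.smul_apply, Pi.add_apply, Pi.sub_apply, Pi.one_apply,
      smul_eq_mul]
    fin_cases k <;> simp <;> field_simp <;>
      first
      | ring1
      | linear_combination 2 * hι2
      | linear_combination (-2 : K) * hι2
      | linear_combination hι2
      | linear_combination -hι2
  · show !![(0:K), ζ; 1, 0] ^ 2 =
      (2 : K)⁻¹ • (ζ • 1 + !![ι, 0; 0, -ι] - ζ • (!![ι, 0; 0, -ι] ^ 2) + !![ι, 0; 0, -ι] ^ 3)
    rw [pow_two, Dpow2 ι hι2, Dpow3 ι hι2, Matrix.mul_fin_two, Matrix.one_fin_two,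
      Matrix.smul_of, Matrix.smul_of]
    ext a b
    fin_cases a <;> fin_cases b <;> simp [Matrix.smul_apply] <;> field_simp <;>
      first
      | ring1
      | linear_combination 2 * hι2
      | linear_combination (-2 : K) * hι2

omit hι2

/-- The algebra map to the target. -/
noncomputable def phiT (hι2 : ι^2 = -1) (h2 : (2:K) ≠ 0) :
    SecondAlg K ζ →ₐ[K] (Fin 4 → K) × Matrix (Fin 2) (Fin 2) K :=
  RingQuot.liftAlgHom K ⟨FreeAlgebra.lift K ![XT ι, YT ι ζ], by
    intro a b h
    induction h with
    | x_pow_four => simp [map_pow, FreeAlgebra.lift_ι_apply, XT_pow_four ι hι2]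
    | x_mul_y => simp [map_mul, map_pow, FreeAlgebra.lift_ι_apply, XT_mul_YT ι ζ hι2]
    | y_sq =>
        simp only [map_pow, map_smul, map_add, map_sub, map_one, FreeAlgebra.lift_ι_apply]
        exact YT_sq ι ζ hι2 h2⟩

theorem phiT_x (hι2 : ι^2 = -1) (h2 : (2:K) ≠ 0) : phiT ι ζ hι2 h2 (xS K ζ) = XT ι := by
  rw [xS, phiT, RingQuot.liftAlgHom_mkAlgHom_apply, FreeAlgebra.lift_ι_apply]
  rfl

theorem phiT_y (hι2 : ι^2 = -1) (h2 : (2:K) ≠ 0) : phiT ι ζ hι2 h2 (yS K ζ) = YT ι ζ := by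
  rw [yS, phiT, RingQuot.liftAlgHom_mkAlgHom_apply, FreeAlgebra.lift_ι_apply]
  rfl

end Target

section InA
variable {K : Type*} [Field K] {ζ : K}

local notation "x" => xS K ζ
local notation "y" => yS K ζ

theorem hx4 : x ^ 4 = 1 := by
  have := RingQuot.mkAlgHom_rel K (SecondRel.x_pow_four (K := K) (ζ := ζ))
  simpa [xS, map_pow, map_one] using this

theorem hxy : x * y = y * x ^ 3 := by
  have := RingQuot.mkAlgHom_rel K (SecondRel.x_mul_y (K := K) (ζ := ζ))
  simpa [xS, yS, map_mul, map_pow] using this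

theorem hy2 : y ^ 2 = (2 : K)⁻¹ • (ζ • 1 + x - ζ • (x ^ 2) + x ^ 3) := by
  have := RingQuot.mkAlgHom_rel K (SecondRel.y_sq (K := K) (ζ := ζ))
  simpa [xS, yS, map_pow, map_smul, map_add, map_sub, map_one] using this

theorem hyx : y * x = x ^ 3 * y := by
  have h1 : x * (y * x) = y := by
    rw [← mul_assoc, hxy, mul_assoc, ← pow_succ, hx4, mul_one]
  calc y * x = x ^ 3 * (x * (y * x)) := by
        rw [← mul_assoc, ← pow_succ, hx4, one_mul]
    _ = x ^ 3 * y := by rw [h1]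

theorem hxpow (n : ℕ) : x ^ (n + 4) = x ^ n := by
  rw [pow_add, hx4, mul_one]

theorem hyx2 : y * x ^ 2 = x ^ 2 * y := by
  have h : y * x ^ 2 = x ^ 3 * (x ^ 3 * y) := by
    rw [pow_two, ← mul_assoc, hyx, mul_assoc, hyx]
  rw [h, ← mul_assoc, ← pow_add, show x ^ (3+3) = x ^ 2 from hxpow 2]

theorem hyx3 : y * x ^ 3 = x * y := by
  have h : y * x ^ 3 = y * x ^ 2 * x := by rw [mul_assoc, ← pow_succ]
  rw [h, hyx2, mul_assoc, hyx, ← mul_assoc, ← pow_add,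
    show x ^ (2+3) = x ^ 1 from hxpow 1, pow_one]


/-- the eight monomials -/
noncomputable def mono : Fin 4 × Fin 2 → SecondAlg K ζ :=
  fun p => x ^ (p.1 : ℕ) * y ^ (p.2 : ℕ)

local notation "S" => Submodule.span K (Set.range (mono (ζ := ζ)))

theorem mem_pow : ∀ n : ℕ, x ^ n ∈ S
  | 0 => Submodule.subset_span ⟨((0 : Fin 4), (0 : Fin 2)), by simp [mono]⟩
  | 1 => Submodule.subset_span ⟨((1 : Fin 4), (0 : Fin 2)), by simp [mono]⟩
  | 2 => Submodule.subset_span ⟨((2 : Fin 4), (0 : Fin 2)), by simp [mono]⟩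
  | 3 => Submodule.subset_span ⟨((3 : Fin 4), (0 : Fin 2)), by simp [mono, show ((3 : Fin 4):ℕ) = 3 from rfl]⟩
  | (m+4) => by rw [hxpow]; exact mem_pow m

theorem mem_pow_y : ∀ n : ℕ, x ^ n * y ∈ S
  | 0 => Submodule.subset_span ⟨((0 : Fin 4), (1 : Fin 2)), by simp [mono]⟩
  | 1 => Submodule.subset_span ⟨((1 : Fin 4), (1 : Fin 2)), by simp [mono]⟩
  | 2 => Submodule.subset_span ⟨((2 : Fin 4), (1 : Fin 2)), by simp [mono]⟩
  | 3 => Submodule.subset_span ⟨((3 : Fin 4), (1 : Fin 2)), by simp [mono, show ((3 : Fin 4):ℕ) = 3 from rfl]⟩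
  | (m+4) => by rw [hxpow]; exact mem_pow_y m

theorem mem_pow_y2 (n : ℕ) : x ^ n * y ^ 2 ∈ S := by
  rw [hy2]
  have h : x ^ n * ((2:K)⁻¹ • (ζ • 1 + x - ζ • x ^ 2 + x ^ 3)) =
      (2:K)⁻¹ • (ζ • x ^ n + x ^ (n+1) - ζ • x ^ (n+2) + x ^ (n+3)) := by
    simp only [mul_smul_comm, mul_add, mul_sub, mul_one, ← pow_succ, ← pow_add]
  rw [h]
  exact Submodule.smul_mem _ _ (add_mem (sub_mem (add_mem
    (Submodule.smul_mem _ _ (mem_pow n)) (mem_pow _))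
    (Submodule.smul_mem _ _ (mem_pow _))) (mem_pow _))

theorem key_yx : ∀ i : Fin 4, ∃ m : ℕ, y * x ^ (i : ℕ) = x ^ m * y
  | 0 => ⟨0, by rw [show ((0 : Fin 4):ℕ) = 0 from rfl, pow_zero, mul_one, one_mul]⟩
  | 1 => ⟨3, by rw [show ((1 : Fin 4):ℕ) = 1 from rfl, pow_one]; exact hyx⟩
  | 2 => ⟨2, by rw [show ((2 : Fin 4):ℕ) = 2 from rfl]; exact hyx2⟩
  | 3 => ⟨1, by rw [show ((3 : Fin 4):ℕ) = 3 from rfl, pow_one]; exact hyx3⟩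

theorem mulx_mem {s : SecondAlg K ζ} (hs : s ∈ S) : x * s ∈ S := by
  induction hs using Submodule.span_induction with
  | mem s hs =>
      obtain ⟨⟨i, j⟩, rfl⟩ := hs
      show x * (x ^ (i:ℕ) * y ^ (j:ℕ)) ∈ S
      rw [← mul_assoc, ← pow_succ']
      match j with
      | 0 => rw [show ((0 : Fin 2):ℕ) = 0 from rfl, pow_zero, mul_one]; exact mem_pow _
      | 1 => rw [show ((1 : Fin 2):ℕ) = 1 from rfl, pow_one]; exact mem_pow_y _
  | zero => simpa using Submodule.zero_mem _
  | add a b _ _ ha hb => rw [mul_add]; exact add_mem ha hb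
  | smul c a _ ha => rw [mul_smul_comm]; exact Submodule.smul_mem _ _ ha

theorem muly_mem {s : SecondAlg K ζ} (hs : s ∈ S) : y * s ∈ S := by
  induction hs using Submodule.span_induction with
  | mem s hs =>
      obtain ⟨⟨i, j⟩, rfl⟩ := hs
      show y * (x ^ (i:ℕ) * y ^ (j:ℕ)) ∈ S
      obtain ⟨m, hm⟩ := key_yx (ζ := ζ) i
      rw [← mul_assoc, hm, mul_assoc]
      match j with
      | 0 => rw [show ((0 : Fin 2):ℕ) = 0 from rfl, pow_zero, mul_one]; exact mem_pow_y m
      | 1 =>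
        rw [show ((1 : Fin 2) : ℕ) = 1 from rfl, pow_one, ← pow_two]
        exact mem_pow_y2 m
  | zero => simpa using Submodule.zero_mem _
  | add a b _ _ ha hb => rw [mul_add]; exact add_mem ha hb
  | smul c a _ ha => rw [mul_smul_comm]; exact Submodule.smul_mem _ _ ha

theorem span_mono_top : S = (⊤ : Submodule K (SecondAlg K ζ)) := by
  have h1 : (1 : SecondAlg K ζ) ∈ S := by
    simpa [mono] using
      Submodule.subset_span (Set.mem_range_self (f := mono (ζ := ζ)) ((0 : Fin 4), (0 : Fin 2)))
  rw [eq_top_iff]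
  intro a _
  obtain ⟨b, rfl⟩ := RingQuot.mkAlgHom_surjective K (SecondRel K ζ) a
  have main : ∀ b : FreeAlgebra K (Fin 2), ∀ s ∈ S,
      RingQuot.mkAlgHom K (SecondRel K ζ) b * s ∈ S := by
    intro b
    induction b using FreeAlgebra.induction with
    | grade0 r =>
        intro s hs
        rw [AlgHom.commutes, ← Algebra.smul_def]
        exact Submodule.smul_mem _ _ hs
    | grade1 i =>
        intro s hs
        fin_cases i
        · exact mulx_mem hs
        · exact muly_mem hs
    | mul a b ha hb =>
        intro s hs
        rw [map_mul, mul_assoc]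
        exact ha _ (hb _ hs)
    | add a b ha hb =>
        intro s hs
        rw [map_add, add_mul]
        exact add_mem (ha _ hs) (hb _ hs)
  simpa using main b 1 h1

end InA

section Final
variable {K : Type*} [Field K] (ι ζ : K) (hι2 : ι^2 = -1)

/-- explicit images of the eight monomials -/
noncomputable def WT : Fin 4 × Fin 2 → (Fin 4 → K) × Matrix (Fin 2) (Fin 2) K :=
  fun p => (XT ι) ^ (p.1 : ℕ) * (YT ι ζ) ^ (p.2 : ℕ)

include hι2

theorem WT00 : WT ι ζ ((0 : Fin 4), (0 : Fin 2)) = (![1,1,1,1], !![1,0;0,1]) := by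
  show (XT ι) ^ 0 * (YT ι ζ) ^ 0 = _
  rw [pow_zero, pow_zero, mul_one, Prod.ext_iff]
  constructor
  · show (1 : Fin 4 → K) = ![1,1,1,1]
    funext k; fin_cases k <;> rfl
  · show (1 : Matrix (Fin 2) (Fin 2) K) = !![1,0;0,1]
    rw [Matrix.one_fin_two]

theorem WT10 : WT ι ζ ((1 : Fin 4), (0 : Fin 2)) = (![1,1,-1,-1], !![ι,0;0,-ι]) := by
  show (XT ι) ^ 1 * (YT ι ζ) ^ 0 = _
  rw [pow_zero, pow_one, mul_one]; rfl

theorem WT20 : WT ι ζ ((2 : Fin 4), (0 : Fin 2)) = (![1,1,1,1], !![-1,0;0,-1]) := by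
  show (XT ι) ^ 2 * (YT ι ζ) ^ 0 = _
  rw [pow_zero, mul_one, Prod.ext_iff]
  constructor
  · show ![(1:K),1,-1,-1] ^ 2 = ![1,1,1,1]
    funext k
    rw [Pi.pow_apply]
    fin_cases k <;> norm_num
  · show !![ι,0;0,-ι] ^ 2 = _
    rw [Dpow2 ι hι2]

theorem WT30 : WT ι ζ ((3 : Fin 4), (0 : Fin 2)) = (![1,1,-1,-1], !![-ι,0;0,ι]) := by
  show (XT ι) ^ 3 * (YT ι ζ) ^ 0 = _
  rw [pow_zero, mul_one, Prod.ext_iff]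
  constructor
  · show ![(1:K),1,-1,-1] ^ 3 = ![1,1,-1,-1]
    funext k
    rw [Pi.pow_apply]
    fin_cases k <;> norm_num
  · show !![ι,0;0,-ι] ^ 3 = _
    rw [Dpow3 ι hι2]

theorem WT01 : WT ι ζ ((0 : Fin 4), (1 : Fin 2)) = (![1,-1,ι,-ι], !![0,ζ;1,0]) := by
  show (XT ι) ^ 0 * (YT ι ζ) ^ 1 = _
  rw [pow_zero, pow_one, one_mul]; rfl

theorem WT11 : WT ι ζ ((1 : Fin 4), (1 : Fin 2)) = (![1,-1,-ι,ι], !![0,ι*ζ;-ι,0]) := by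
  show (XT ι) ^ 1 * (YT ι ζ) ^ 1 = _
  rw [pow_one, pow_one, Prod.ext_iff]
  constructor
  · show ![(1:K),1,-1,-1] * ![1,-1,ι,-ι] = _
    funext k
    rw [Pi.mul_apply]
    fin_cases k <;> norm_num
  · show !![ι,0;0,-ι] * !![0,ζ;1,0] = _
    rw [Matrix.mul_fin_two]
    norm_num

theorem WT21 : WT ι ζ ((2 : Fin 4), (1 : Fin 2)) = (![1,-1,ι,-ι], !![0,-ζ;-1,0]) := by
  show (XT ι) ^ 2 * (YT ι ζ) ^ 1 = _
  rw [pow_one, Prod.ext_iff]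
  constructor
  · show ![(1:K),1,-1,-1] ^ 2 * ![1,-1,ι,-ι] = _
    funext k
    rw [Pi.mul_apply, Pi.pow_apply]
    fin_cases k <;> norm_num
  · show !![ι,0;0,-ι] ^ 2 * !![0,ζ;1,0] = _
    rw [Dpow2 ι hι2, Matrix.mul_fin_two]
    norm_num

theorem WT31 : WT ι ζ ((3 : Fin 4), (1 : Fin 2)) = (![1,-1,-ι,ι], !![0,-(ι*ζ);ι,0]) := by
  show (XT ι) ^ 3 * (YT ι ζ) ^ 1 = _
  rw [pow_one, Prod.ext_iff]
  constructor
  · show ![(1:K),1,-1,-1] ^ 3 * ![1,-1,ι,-ι] = _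
    funext k
    rw [Pi.mul_apply, Pi.pow_apply]
    fin_cases k <;> norm_num
  · show !![ι,0;0,-ι] ^ 3 * !![0,ζ;1,0] = _
    rw [Dpow3 ι hι2, Matrix.mul_fin_two]
    norm_num


theorem li_WT (h2 : (2:K) ≠ 0) (hζ0 : ζ ≠ 0) (hι0 : ι ≠ 0) :
    LinearIndependent K (WT ι ζ (K := K)) := by
  rw [Fintype.linearIndependent_iff]
  intro c hc
  rw [Fintype.sum_prod_type] at hc
  simp only [Fin.sum_univ_four, Fin.sum_univ_two, WT00 ι ζ hι2, WT01 ι ζ hι2, WT10 ι ζ hι2,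
    WT11 ι ζ hι2, WT20 ι ζ hι2, WT21 ι ζ hι2, WT30 ι ζ hι2, WT31 ι ζ hι2] at hc
  have hfst := congrArg Prod.fst hc
  have hsnd := congrArg Prod.snd hc
  simp only [Prod.fst_add, Prod.snd_add, Prod.smul_fst, Prod.smul_snd, Prod.fst_zero,
    Prod.snd_zero] at hfst hsnd
  have e10 := congrFun hfst 0
  have e11 := congrFun hfst 1
  have e12 := congrFun hfst 2
  have e13 := congrFun hfst 3
  have m00 := congrFun (congrFun hsnd 0) 0
  have m11 := congrFun (congrFun hsnd 1) 1
  have m01 := congrFun (congrFun hsnd 0) 1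
  have m10 := congrFun (congrFun hsnd 1) 0
  simp [Matrix.add_apply, Matrix.smul_apply, smul_eq_mul] at e10 e11 e12 e13 m00 m11 m01 m10
  have h4 : (4:K) ≠ 0 := by
    rw [show (4:K) = 2*2 by norm_num]
    exact mul_ne_zero h2 h2
  have G1 : c 0 + c (1,0) + c (2,0) + c (3,0) = 0 := by
    have h : (2:K) * (c 0 + c (1,0) + c (2,0) + c (3,0)) = 0 := by linear_combination e10 + e11
    exact (mul_eq_zero.mp h).resolve_left h2
  have Gm1 : c 0 - c (1,0) + c (2,0) - c (3,0) = 0 := by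
    have h : (2:K) * (c 0 - c (1,0) + c (2,0) - c (3,0)) = 0 := by linear_combination e12 + e13
    exact (mul_eq_zero.mp h).resolve_left h2
  have F1 : c (0,1) + c 1 + c (2,1) + c (3,1) = 0 := by
    have h : (2:K) * (c (0,1) + c 1 + c (2,1) + c (3,1)) = 0 := by linear_combination e10 - e11
    exact (mul_eq_zero.mp h).resolve_left h2
  have Fm1 : c (0,1) - c 1 + c (2,1) - c (3,1) = 0 := by
    have h : (2:K) * (ι * (c (0,1) - c 1 + c (2,1) - c (3,1))) = 0 := by
      linear_combination e12 - e13
    exact ((mul_eq_zero.mp ((mul_eq_zero.mp h).resolve_left h2)).resolve_left hι0)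
  have Fi : c (0,1) + ι * c 1 - c (2,1) - ι * c (3,1) = 0 := by
    have h : ζ * (c (0,1) + ι * c 1 - c (2,1) - ι * c (3,1)) = 0 := by
      linear_combination m01
    exact (mul_eq_zero.mp h).resolve_left hζ0
  have h00 : c 0 = 0 := by
    have h : (4:K) * c 0 = 0 := by linear_combination G1 + Gm1 + m00 + m11
    exact (mul_eq_zero.mp h).resolve_left h4
  have h10 : c (1,0) = 0 := by
    have h : (4:K) * c (1,0) = 0 := by
      linear_combination G1 - Gm1 - ι * m00 + ι * m11 + (2 * c (1,0) - 2 * c (3,0)) * hι2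
    exact (mul_eq_zero.mp h).resolve_left h4
  have h20 : c (2,0) = 0 := by
    have h : (4:K) * c (2,0) = 0 := by linear_combination G1 + Gm1 - m00 - m11
    exact (mul_eq_zero.mp h).resolve_left h4
  have h30 : c (3,0) = 0 := by
    have h : (4:K) * c (3,0) = 0 := by
      linear_combination G1 - Gm1 + ι * m00 - ι * m11 + (2 * c (3,0) - 2 * c (1,0)) * hι2
    exact (mul_eq_zero.mp h).resolve_left h4
  have h01 : c (0,1) = 0 := by
    have h : (4:K) * c (0,1) = 0 := by linear_combination F1 + Fm1 + Fi + m10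
    exact (mul_eq_zero.mp h).resolve_left h4
  have h11 : c 1 = 0 := by
    have h : (4:K) * c 1 = 0 := by
      linear_combination F1 - Fm1 - ι * Fi + ι * m10 + (2 * c 1 - 2 * c (3,1)) * hι2
    exact (mul_eq_zero.mp h).resolve_left h4
  have h21 : c (2,1) = 0 := by
    have h : (4:K) * c (2,1) = 0 := by linear_combination F1 + Fm1 - Fi - m10
    exact (mul_eq_zero.mp h).resolve_left h4
  have h31 : c (3,1) = 0 := by
    have h : (4:K) * c (3,1) = 0 := by
      linear_combination F1 - Fm1 + ι * Fi - ι * m10 + (2 * c (3,1) - 2 * c 1) * hι2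
    exact (mul_eq_zero.mp h).resolve_left h4
  intro p
  fin_cases p
  exacts [h00, h01, h10, h11, h20, h21, h30, h31]

end Final


theorem stmt_17 {K : Type*} [Field K] (ι : K) (hι : IsPrimitiveRoot ι 4)
    (ζ : K) (hζ : ζ ^ 4 = 1) :
    Nonempty (SecondAlg K ζ ≃ₐ[K] ((Fin 4 → K) × Matrix (Fin 2) (Fin 2) K)) ∧
      IsSemisimpleRing (SecondAlg K ζ) := by
  have hι4 : ι ^ 4 = 1 := hι.pow_eq_one
  have hι2ne : ι ^ 2 ≠ 1 := hι.pow_ne_one_of_pos_of_lt (by norm_num) (by norm_num)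
  have hι2 : ι ^ 2 = -1 := by
    have h : (ι ^ 2 - 1) * (ι ^ 2 + 1) = 0 := by linear_combination hι4
    rcases mul_eq_zero.mp h with h | h
    · exact absurd (by linear_combination h) hι2ne
    · linear_combination h
  have h2 : (2:K) ≠ 0 := by
    intro h20
    apply hι2ne
    rw [hι2]
    linear_combination -h20
  have hζ0 : ζ ≠ 0 := by
    intro h
    rw [h] at hζ
    simp at hζ
  have hι0 : ι ≠ 0 := by
    intro h
    rw [h] at hι2
    rw [zero_pow (by norm_num)] at hι2
    exact absurd hι2.symm (by norm_num)
  set φ := phiT ι ζ hι2 h2 with hφ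
  have hφm : ∀ p : Fin 4 × Fin 2, φ (mono p) = WT ι ζ p := by
    intro p
    show φ (xS K ζ ^ ((p.1 : Fin 4) : ℕ) * yS K ζ ^ ((p.2 : Fin 2) : ℕ)) = _
    rw [map_mul, map_pow, map_pow, phiT_x ι ζ hι2 h2, phiT_y ι ζ hι2 h2]
    rfl
  have hli := li_WT ι ζ hι2 h2 hζ0 hι0
  have hcard : Fintype.card (Fin 4 × Fin 2)
      = Module.finrank K ((Fin 4 → K) × Matrix (Fin 2) (Fin 2) K) := by
    rw [Module.finrank_prod, Module.finrank_pi, Module.finrank_matrix]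
    simp
  have hspanW := LinearIndependent.span_eq_top_of_card_eq_finrank hli hcard
  have hinj : Function.Injective φ := by
    rw [injective_iff_map_eq_zero]
    intro a ha
    have hmem : a ∈ Submodule.span K (Set.range (mono (ζ := ζ))) := by
      rw [span_mono_top]
      trivial
    rw [Submodule.mem_span_range_iff_exists_fun] at hmem
    obtain ⟨cc, hcc⟩ := hmem
    have h0 : ∑ p : Fin 4 × Fin 2, cc p • WT ι ζ p = 0 := by
      rw [← ha, ← hcc]
      simp [map_sum, map_smul, hφm]
    have hz := Fintype.linearIndependent_iff.mp hli cc h0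
    rw [← hcc]
    simp [hz]
  have hsurj : Function.Surjective φ := by
    intro t
    have ht : t ∈ Submodule.span K (Set.range (WT ι ζ)) := by
      rw [hspanW]
      trivial
    rw [Submodule.mem_span_range_iff_exists_fun] at ht
    obtain ⟨cc, hcc⟩ := ht
    exact ⟨∑ p : Fin 4 × Fin 2, cc p • mono p, by simp [map_sum, map_smul, hφm, hcc]⟩
  let e := AlgEquiv.ofBijective φ ⟨hinj, hsurj⟩
  exact ⟨⟨e⟩, e.symm.toRingEquiv.isSemisimpleRing⟩
end
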